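/- Fix an integer ν ≥ 1 and let V : ℤ^ν → ℝ be bounded with V(n) → 0 as |n|₁ → ∞. If H₀ + (4ν)⁻¹V² has an eigenvalue E with |E| > 2ν (where V² denotes multiplication by V(n)²), then H₀ + V has an eigenvalue E′ with |E′| > 2ν. -/

import Mathlib

noncomputable section

open scoped ComplexConjugate

namespace DHKS

/-- The Hilbert space ℓ²(α; ℂ). -/
abbrev L2 (α : Type*) := lp (fun _ : α => ℂ) 2

variable {α β : Type*}

lemma memℓp_two_iff (f : α → ℂ) :
    Memℓp f 2 ↔ Summable (fun n => ‖f n‖ ^ (2 : ℝ)) := by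
  rw [memℓp_gen_iff (by norm_num)]
  norm_num

lemma sum_sq_le (u : L2 α) (s : Finset α) :
    ∑ n ∈ s, ‖(u : α → ℂ) n‖ ^ (2:ℝ) ≤ ‖u‖ ^ (2:ℝ) := by
  simpa using lp.sum_rpow_le_norm_rpow (p := 2) (by norm_num) u s

lemma norm_le_of_sum_sq (u : L2 α) {C : ℝ} (hC : 0 ≤ C)
    (h : ∀ s : Finset α, ∑ n ∈ s, ‖(u : α → ℂ) n‖ ^ (2:ℝ) ≤ C ^ (2:ℝ)) : ‖u‖ ≤ C := by
  refine lp.norm_le_of_forall_sum_le (p := 2) (by norm_num) hC ?_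
  simpa using h

/-- Composition with an injective map, as a continuous linear map on ℓ². -/
def compOp (σ : α → β) (hσ : Function.Injective σ) : L2 β →L[ℂ] L2 α :=
  LinearMap.mkContinuous
    { toFun := fun u => ⟨fun n => (u : β → ℂ) (σ n), by
        apply (memℓp_two_iff _).2
        exact ((memℓp_two_iff _).1 (lp.memℓp u)).comp_injective hσ⟩
      map_add' := by
        intro u v; apply lp.ext; funext n
        simp only [lp.coeFn_add, Pi.add_apply]
      map_smul' := by
        intro c u; apply lp.ext; funext n
        simp only [lp.coeFn_smul, Pi.smul_apply, RingHom.id_apply] }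
    1 (by
      intro u
      rw [one_mul]
      refine norm_le_of_sum_sq _ (norm_nonneg u) (fun s => ?_)
      classical
      calc ∑ n ∈ s, ‖(u : β → ℂ) (σ n)‖ ^ (2:ℝ)
          = ∑ m ∈ s.image σ, ‖(u : β → ℂ) m‖ ^ (2:ℝ) := by
            rw [Finset.sum_image (fun a _ b _ h => hσ h)]
        _ ≤ ‖u‖ ^ (2:ℝ) := sum_sq_le u _)

@[simp] lemma compOp_apply (σ : α → β) (hσ : Function.Injective σ) (u : L2 β) (n : α) :
    (compOp σ hσ u : α → ℂ) n = (u : β → ℂ) (σ n) := rfl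

/-- Multiplication by a bounded real-valued function, as a continuous linear map on ℓ². -/
def mulOp (V : α → ℝ) (C : ℝ) (hC : ∀ n, |V n| ≤ C) : L2 α →L[ℂ] L2 α :=
  LinearMap.mkContinuous
    { toFun := fun u => ⟨fun n => (V n : ℂ) * (u : α → ℂ) n, by
        apply (memℓp_two_iff _).2
        have h := (((memℓp_two_iff _).1 (lp.memℓp u)).mul_left ((max C 0) ^ (2:ℝ)))
        apply Summable.of_nonneg_of_le (fun n => by positivity) (fun n => ?_) h
        have h1 : ‖(V n : ℂ) * (u : α → ℂ) n‖ = |V n| * ‖(u : α → ℂ) n‖ := by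
          rw [norm_mul, Complex.norm_real, Real.norm_eq_abs]
        rw [h1, Real.mul_rpow (abs_nonneg _) (norm_nonneg _)]
        have h3 : |V n| ^ (2:ℝ) ≤ (max C 0) ^ (2:ℝ) :=
          Real.rpow_le_rpow (abs_nonneg _) (le_max_of_le_left (hC n)) (by norm_num)
        exact mul_le_mul_of_nonneg_right h3 (by positivity)⟩
      map_add' := by
        intro u v; apply lp.ext; funext n
        simp only [lp.coeFn_add, Pi.add_apply]
        ring
      map_smul' := by
        intro c u; apply lp.ext; funext n
        simp only [lp.coeFn_smul, Pi.smul_apply, RingHom.id_apply, smul_eq_mul]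
        ring }
    (max C 0) (by
      intro u
      refine norm_le_of_sum_sq _ (by positivity) (fun s => ?_)
      have key : ∀ n ∈ s, ‖(V n : ℂ) * (u : α → ℂ) n‖ ^ (2:ℝ)
          ≤ (max C 0) ^ (2:ℝ) * ‖(u : α → ℂ) n‖ ^ (2:ℝ) := by
        intro n _
        have h1 : ‖(V n : ℂ) * (u : α → ℂ) n‖ = |V n| * ‖(u : α → ℂ) n‖ := by
          rw [norm_mul, Complex.norm_real, Real.norm_eq_abs]
        rw [h1, Real.mul_rpow (abs_nonneg _) (norm_nonneg _)]
        have h3 : |V n| ^ (2:ℝ) ≤ (max C 0) ^ (2:ℝ) :=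
          Real.rpow_le_rpow (abs_nonneg _) (le_max_of_le_left (hC n)) (by norm_num)
        exact mul_le_mul_of_nonneg_right h3 (by positivity)
      calc ∑ n ∈ s, ‖(V n : ℂ) * (u : α → ℂ) n‖ ^ (2:ℝ)
          ≤ ∑ n ∈ s, (max C 0) ^ (2:ℝ) * ‖(u : α → ℂ) n‖ ^ (2:ℝ) := Finset.sum_le_sum key
        _ = (max C 0) ^ (2:ℝ) * ∑ n ∈ s, ‖(u : α → ℂ) n‖ ^ (2:ℝ) := by rw [Finset.mul_sum]
        _ ≤ (max C 0) ^ (2:ℝ) * ‖u‖ ^ (2:ℝ) :=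
            mul_le_mul_of_nonneg_left (sum_sq_le u _) (by positivity)
        _ = (max C 0 * ‖u‖) ^ (2:ℝ) :=
            (Real.mul_rpow (le_max_right _ _) (norm_nonneg _)).symm)

@[simp] lemma mulOp_apply (V : α → ℝ) (C : ℝ) (hC : ∀ n, |V n| ≤ C) (u : L2 α) (n : α) :
    (mulOp V C hC u : α → ℂ) n = (V n : ℂ) * (u : α → ℂ) n := rfl

/-- Extension by zero along an injective map, as a continuous linear map on ℓ². -/
def extOp (σ : α → β) (hσ : Function.Injective σ) : L2 α →L[ℂ] L2 β :=
  LinearMap.mkContinuous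
    { toFun := fun u => ⟨Function.extend σ (u : α → ℂ) 0, by
        apply (memℓp_two_iff _).2
        have hpt : (fun b => ‖Function.extend σ (u : α → ℂ) 0 b‖ ^ (2:ℝ))
            = Function.extend σ (fun a => ‖(u : α → ℂ) a‖ ^ (2:ℝ)) 0 := by
          funext b
          rcases em (∃ a, σ a = b) with ⟨a, rfl⟩ | hb
          · rw [hσ.extend_apply, hσ.extend_apply]
          · rw [Function.extend_apply' _ _ _ hb, Function.extend_apply' _ _ _ hb]
            simp [Real.zero_rpow (by norm_num : (2:ℝ) ≠ 0)]
        rw [hpt, summable_extend_zero hσ]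
        exact (memℓp_two_iff _).1 (lp.memℓp u)⟩
      map_add' := by
        intro u v; apply lp.ext; funext b
        simp only [lp.coeFn_add, Pi.add_apply]
        rcases em (∃ a, σ a = b) with ⟨a, rfl⟩ | hb
        · rw [hσ.extend_apply, hσ.extend_apply, hσ.extend_apply]
          simp [lp.coeFn_add]
        · rw [Function.extend_apply' _ _ _ hb, Function.extend_apply' _ _ _ hb,
            Function.extend_apply' _ _ _ hb]
          simp
      map_smul' := by
        intro c u; apply lp.ext; funext b
        simp only [lp.coeFn_smul, Pi.smul_apply, RingHom.id_apply, smul_eq_mul]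
        rcases em (∃ a, σ a = b) with ⟨a, rfl⟩ | hb
        · rw [hσ.extend_apply, hσ.extend_apply]
          simp [lp.coeFn_smul]
        · rw [Function.extend_apply' _ _ _ hb, Function.extend_apply' _ _ _ hb]
          simp }
    1 (by
      intro u
      rw [one_mul]
      refine norm_le_of_sum_sq _ (norm_nonneg u) (fun s => ?_)
      have hpt : (fun b => ‖Function.extend σ (u : α → ℂ) 0 b‖ ^ (2:ℝ))
          = Function.extend σ (fun a => ‖(u : α → ℂ) a‖ ^ (2:ℝ)) 0 := by
        funext b
        rcases em (∃ a, σ a = b) with ⟨a, rfl⟩ | hb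
        · rw [hσ.extend_apply, hσ.extend_apply]
        · rw [Function.extend_apply' _ _ _ hb, Function.extend_apply' _ _ _ hb]
          simp [Real.zero_rpow (by norm_num : (2:ℝ) ≠ 0)]
      have hsumm : Summable (fun a => ‖(u : α → ℂ) a‖ ^ (2:ℝ)) :=
        (memℓp_two_iff _).1 (lp.memℓp u)
      calc ∑ b ∈ s, ‖Function.extend σ (u : α → ℂ) 0 b‖ ^ (2:ℝ)
          ≤ ∑' b, ‖Function.extend σ (u : α → ℂ) 0 b‖ ^ (2:ℝ) := by
            refine Summable.sum_le_tsum s (fun b _ => by positivity) ?_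
            rw [hpt, summable_extend_zero hσ]; exact hsumm
        _ = ∑' a, ‖(u : α → ℂ) a‖ ^ (2:ℝ) := by
            rw [hpt, tsum_extend_zero hσ]
        _ = ‖u‖ ^ (2:ℝ) := by
            simpa using (lp.norm_rpow_eq_tsum (p := 2) (by norm_num) u).symm)

lemma extOp_apply (σ : α → β) (hσ : Function.Injective σ) (u : L2 α) (b : β) :
    (extOp σ hσ u : β → ℂ) b = Function.extend σ (u : α → ℂ) 0 b := rfl

/-- The real quadratic form ⟨φ, A φ⟩ of an operator. -/
def quadForm (A : L2 α →L[ℂ] L2 α) (φ : L2 α) : ℝ :=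
  (inner ℂ φ (A φ) : ℂ).re

/-- `E` is an eigenvalue of the bounded operator `A`. -/
def IsEigenvalue (A : L2 α →L[ℂ] L2 α) (E : ℝ) : Prop :=
  ∃ u : L2 α, u ≠ 0 ∧ A u = (E : ℂ) • u

lemma abs_mul_sq_le {γ x Cb : ℝ} (h : |x| ≤ Cb) : |γ * x ^ 2| ≤ |γ| * Cb ^ 2 := by
  have h1 := abs_le.1 h
  rw [abs_mul, abs_of_nonneg (sq_nonneg x)]
  exact mul_le_mul_of_nonneg_left (sq_le_sq' (by linarith [h1.1]) h1.2) (abs_nonneg γ)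

end DHKS

namespace DHKS

/-! ## The lattice ℤ^ν -/

/-- The lattice `ℤ^ν`. -/
abbrev Zlat (ν : ℕ) := Fin ν → ℤ

/-- The ℓ¹-norm `|n|₁ = |n₁| + ⋯ + |n_ν|` of a lattice point. -/
def normOne {ν : ℕ} (n : Zlat ν) : ℕ := ∑ i, (n i).natAbs

/-- The `i`-th standard unit vector in `ℤ^ν`. -/
def unitVec (ν : ℕ) (i : Fin ν) : Zlat ν := fun k => if k = i then 1 else 0

/-- The free discrete Schrödinger operator `(H₀ u)(n) = ∑_{|j|₁ = 1} u(n+j)`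
on `ℓ²(ℤ^ν)`, written as the sum over translations by `± eᵢ`. -/
def H0 (ν : ℕ) : L2 (Zlat ν) →L[ℂ] L2 (Zlat ν) :=
  ∑ i : Fin ν,
    (compOp (fun n => n + unitVec ν i) (add_left_injective _) +
      compOp (fun n => n + (-unitVec ν i)) (add_left_injective _))

lemma H0_apply {ν : ℕ} (u : L2 (Zlat ν)) (n : Zlat ν) :
    (H0 ν u : Zlat ν → ℂ) n =
      ∑ i : Fin ν, ((u : Zlat ν → ℂ) (n + unitVec ν i) + (u : Zlat ν → ℂ) (n - unitVec ν i)) := by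
  simp [H0, ContinuousLinearMap.sum_apply, lp.coeFn_sum, Finset.sum_apply,
    ContinuousLinearMap.add_apply, lp.coeFn_add, Pi.add_apply, sub_eq_add_neg]
  erw [Finset.sum_apply]
  simp

/-- The unitary `(U φ)(n) = (-1)^{|n|₁} φ(n)`. -/
def Uop (ν : ℕ) : L2 (Zlat ν) →L[ℂ] L2 (Zlat ν) :=
  mulOp (fun n => (-1 : ℝ) ^ normOne n) 1 (fun n => by simp [abs_pow])

/-- The discrete Schrödinger operator `H = H₀ + V` on `ℓ²(ℤ^ν)`. -/
def schrodinger (ν : ℕ) (V : Zlat ν → ℝ) (C : ℝ) (hC : ∀ n, |V n| ≤ C) :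
    L2 (Zlat ν) →L[ℂ] L2 (Zlat ν) :=
  H0 ν + mulOp V C hC

/-- The quantity `Δ(φ₊, φ₋; V) = ⟨φ₊, (H-2ν)φ₊⟩ + ⟨φ₋, (-H-2ν)φ₋⟩`. -/
def Delta (ν : ℕ) (V : Zlat ν → ℝ) (C : ℝ) (hC : ∀ n, |V n| ≤ C)
    (φp φm : L2 (Zlat ν)) : ℝ :=
  quadForm (schrodinger ν V C hC - ((2 * (ν:ℝ) : ℝ) : ℂ) • 1) φp +
    quadForm (-schrodinger ν V C hC - ((2 * (ν:ℝ) : ℝ) : ℂ) • 1) φm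

end DHKS

/-!
Suppose every eigenvalue of `H = H₀ + V` lies in `[-2ν, 2ν]`. Multiplication by `V` is compact
because `V → 0`, and `‖H₀‖ ≤ 2ν`; so if `⟨φ, H φ⟩ / ‖φ‖²` had supremum `μ > 2ν`, a maximizing
sequence would be a Weyl sequence for `μ` that converges after passing to a subsequence, making `μ`
an eigenvalue. Hence `|⟨φ, H φ⟩| ≤ 2ν ‖φ‖²`. The parity `(U φ)(n) = (-1)^{|n|₁} φ(n)`
anticommutes with `H₀` and commutes with `V`, which turns this into
`|⟨φ, V φ⟩| ≤ ⟨φ, (2ν - H₀) φ⟩`. Polarization upgrades the form bound to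
`‖V φ‖² ≤ 4ν ⟨φ, (2ν - H₀) φ⟩`, i.e. `H₀ + (4ν)⁻¹ V² ≤ 2ν`; since also `H₀ ≥ -2ν` and `V² ≥ 0`,
every eigenvalue of `H₀ + (4ν)⁻¹ V²` lies in `[-2ν, 2ν]`.
-/

open scoped InnerProductSpace
open Filter Topology RCLike

section Banach

variable {𝕜 X Y : Type*} [NontriviallyNormedField 𝕜] [NormedAddCommGroup X] [NormedSpace 𝕜 X]
  [NormedAddCommGroup Y] [NormedSpace 𝕜 Y]

theorem IsCompactOperator.exists_tendsto_subseq {K : X →L[𝕜] Y} (hK : IsCompactOperator K)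
    {φ : ℕ → X} {r : ℝ} (hφ : ∀ k, ‖φ k‖ ≤ r) :
    ∃ w : Y, ∃ g : ℕ → ℕ, StrictMono g ∧ Tendsto (fun j => K (φ (g j))) atTop (𝓝 w) := by
  obtain ⟨w, -, g, hg, hw⟩ := (hK.isCompact_closure_image_closedBall r).tendsto_subseq
    fun k => subset_closure ⟨φ k, mem_closedBall_zero_iff.2 (hφ k), rfl⟩
  exact ⟨w, g, hg, hw⟩

theorem exists_eigenvector_of_tendsto_apply_sub_smul [CompleteSpace X] {H K : X →L[𝕜] X}
    (hK : IsCompactOperator K) {μ : 𝕜} (hHμ : ‖H‖ < ‖μ‖) {φ : ℕ → X} (hφ : ∀ k, ‖φ k‖ = 1)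
    (hlim : Tendsto (fun k => (H + K) (φ k) - μ • φ k) atTop (𝓝 0)) :
    ∃ u : X, u ≠ 0 ∧ (H + K) u = μ • u := by
  obtain ⟨w, g, hg, hw⟩ := hK.exists_tendsto_subseq (fun k => (hφ k).le)
  have hres : μ ∈ resolventSet 𝕜 H := spectrum.mem_resolventSet_of_norm_lt_mul
    ((mul_le_of_le_one_right (norm_nonneg _) ContinuousLinearMap.norm_id_le).trans_lt hHμ)
  set R : X →L[𝕜] X := ↑(spectrum.mem_resolventSet_iff.1 hres).unit⁻¹
  -- `(μ - H) φ = K φ - ((H + K) φ - μ φ)` converges along `g`, and `μ - H` is invertible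
  have hrep k : φ k = R (K (φ k) - ((H + K) (φ k) - μ • φ k)) := by
    have hinv : R * (algebraMap 𝕜 (X →L[𝕜] X) μ - H) = 1 := IsUnit.val_inv_mul _
    have := congrArg (fun T : X →L[𝕜] X => T (φ k)) hinv
    simp only [mul_apply_eq_comp, sub_apply, one_apply_eq_self,
      ContinuousLinearMap.algebraMap_apply] at this
    conv_lhs => rw [← this]
    congr 1
    rw [add_apply]
    abel
  have hψ : Tendsto (fun j => φ (g j)) atTop (𝓝 (R w)) := by
    have := (R.continuous.tendsto _).comp (sub_zero w ▸ hw.sub (hlim.comp hg.tendsto_atTop))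
    exact this.congr fun j => (hrep (g j)).symm
  have hψ1 : ‖R w‖ = 1 :=
    tendsto_nhds_unique hψ.norm (by simp only [hφ]; exact tendsto_const_nhds)
  refine ⟨R w, norm_ne_zero_iff.1 (by rw [hψ1]; exact one_ne_zero), ?_⟩
  have hlim' := (((H + K).continuous.tendsto (R w)).comp hψ).sub (hψ.const_smul μ)
  exact sub_eq_zero.1 (tendsto_nhds_unique hlim' (hlim.comp hg.tendsto_atTop))

end Banach

section Hilbert

variable {𝕜 E : Type*} [RCLike 𝕜] [NormedAddCommGroup E] [InnerProductSpace 𝕜 E]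

local notation "⟪" x ", " y "⟫" => inner 𝕜 x y

lemma re_inner_map_add_add_re_inner_map_sub (A : E →ₗ[𝕜] E) (x y : E) :
    re ⟪A (x + y), x + y⟫ + re ⟪A (x - y), x - y⟫ = 2 * re ⟪A x, x⟫ + 2 * re ⟪A y, y⟫ := by
  simp only [map_add, map_sub, inner_add_left, inner_add_right, inner_sub_left,
    inner_sub_right]
  ring

lemma LinearMap.IsSymmetric.re_inner_map_add_sub_re_inner_map_sub {B : E →ₗ[𝕜] E}
    (hB : B.IsSymmetric) (x y : E) :
    re ⟪B (x + y), x + y⟫ - re ⟪B (x - y), x - y⟫ = 4 * re ⟪B x, y⟫ := by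
  have hyx : re ⟪B y, x⟫ = re ⟪B x, y⟫ := by rw [hB, inner_re_symm]
  simp only [map_add, map_sub, inner_add_left, inner_add_right, inner_sub_left,
    inner_sub_right]
  linarith

lemma re_inner_smul_sub_apply_self (T : E →ₗ[𝕜] E) (c : ℝ) (z : E) :
    re ⟪((c : 𝕜) • LinearMap.id - T : E →ₗ[𝕜] E) z, z⟫ = c * ‖z‖ ^ 2 - re ⟪T z, z⟫ := by
  simp [inner_sub_left, inner_smul_left]

lemma abs_re_inner_apply_self_le (T : E →L[𝕜] E) (z : E) : |re ⟪T z, z⟫| ≤ ‖T‖ * ‖z‖ ^ 2 :=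
  calc |re ⟪T z, z⟫| ≤ ‖⟪T z, z⟫‖ := abs_re_le_norm _
    _ ≤ ‖T z‖ * ‖z‖ := norm_inner_le_norm _ _
    _ ≤ ‖T‖ * ‖z‖ * ‖z‖ := by gcongr; exact T.le_opNorm z
    _ = ‖T‖ * ‖z‖ ^ 2 := by ring

theorem LinearMap.IsSymmetric.norm_sq_le_of_abs_re_inner_le {A B : E →ₗ[𝕜] E}
    (hB : B.IsSymmetric) {c : ℝ} (hc : 0 < c) (hBA : ∀ z, |re ⟪B z, z⟫| ≤ re ⟪A z, z⟫)
    (hA : ∀ z, re ⟪A z, z⟫ ≤ c * ‖z‖ ^ 2) (x : E) :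
    ‖B x‖ ^ 2 ≤ c * re ⟪A x, x⟫ := by
  -- test the form bound on `c x ± B x`
  have hpol := hB.re_inner_map_add_sub_re_inner_map_sub ((c : 𝕜) • x) (B x)
  have hpar := re_inner_map_add_add_re_inner_map_sub A ((c : 𝕜) • x) (B x)
  have hsum := (abs_le.1 (hBA ((c : 𝕜) • x + B x))).2
  have hdiff := (abs_le.1 (hBA ((c : 𝕜) • x - B x))).1
  have hBx := hA (B x)
  have hcross : re ⟪B ((c : 𝕜) • x), B x⟫ = c * ‖B x‖ ^ 2 := by
    rw [map_smul, inner_smul_left, conj_ofReal, re_ofReal_mul, inner_self_eq_norm_sq]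
  have hscale : re ⟪A ((c : 𝕜) • x), (c : 𝕜) • x⟫ = c ^ 2 * re ⟪A x, x⟫ := by
    rw [map_smul, inner_smul_left, inner_smul_right, conj_ofReal, ← mul_assoc,
      ← ofReal_mul, re_ofReal_mul]
    ring
  have : c * (c * ‖B x‖ ^ 2) ≤ c * (c ^ 2 * re ⟪A x, x⟫) := by nlinarith
  nlinarith [le_of_mul_le_mul_left this hc]

theorem LinearMap.IsSymmetric.tendsto_apply_sub_smul {T : E →L[𝕜] E}
    (hT : (T : E →ₗ[𝕜] E).IsSymmetric) {μ : ℝ} (hμ : ∀ z, re ⟪T z, z⟫ ≤ μ * ‖z‖ ^ 2)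
    {φ : ℕ → E} (hφ : ∀ k, ‖φ k‖ = 1)
    (hlim : Tendsto (fun k => re ⟪T (φ k), φ k⟫) atTop (𝓝 μ)) :
    Tendsto (fun k => T (φ k) - (μ : 𝕜) • φ k) atTop (𝓝 0) := by
  set P : E →ₗ[𝕜] E := (μ : 𝕜) • LinearMap.id - (T : E →ₗ[𝕜] E)
  have hP : P.IsSymmetric :=
    ((LinearMap.IsSymmetric.id (𝕜 := 𝕜) (E := E)).smul (conj_ofReal μ)).sub hT
  have hPform z : re ⟪P z, z⟫ = μ * ‖z‖ ^ 2 - re ⟪T z, z⟫ := re_inner_smul_sub_apply_self _ _ _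
  have hc : 0 < |μ| + ‖T‖ + 1 := by positivity
  -- `P = μ - T` is positive, so the residual `‖P φ‖²` is controlled by the gap `⟪P φ, φ⟫`
  have hbound k :
      ‖T (φ k) - (μ : 𝕜) • φ k‖ ^ 2 ≤ (|μ| + ‖T‖ + 1) * (μ - re ⟪T (φ k), φ k⟫) := by
    have key := hP.norm_sq_le_of_abs_re_inner_le hc
      (fun z => (abs_of_nonneg (by rw [hPform]; linarith [hμ z])).le)
      (fun z => by
        rw [hPform]
        nlinarith [mul_le_mul_of_nonneg_right (le_abs_self μ) (sq_nonneg ‖z‖),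
          abs_le.1 (abs_re_inner_apply_self_le T z), sq_nonneg ‖z‖])
      (φ k)
    have hPφ : T (φ k) - (μ : 𝕜) • φ k = -P (φ k) := by simp [P]
    rwa [hPform, hφ k, one_pow, mul_one, ← norm_neg, ← hPφ] at key
  have hsq : Tendsto (fun k => ‖T (φ k) - (μ : 𝕜) • φ k‖ ^ 2) atTop (𝓝 0) := by
    refine squeeze_zero (fun k => by positivity) hbound ?_
    simpa using ((tendsto_const_nhds (x := μ)).sub hlim).const_mul (|μ| + ‖T‖ + 1)
  rw [tendsto_zero_iff_norm_tendsto_zero]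
  simpa [Real.sqrt_sq (norm_nonneg _)] using hsq.sqrt
theorem exists_eigenvalue_gt_of_lt_re_inner [CompleteSpace E] {H K : E →L[𝕜] E}
    (hH : (H : E →ₗ[𝕜] E).IsSymmetric) (hK : (K : E →ₗ[𝕜] E).IsSymmetric)
    (hKc : IsCompactOperator K) {m : ℝ} (hHm : ‖H‖ ≤ m) {x : E}
    (hx : m * ‖x‖ ^ 2 < re ⟪(H + K) x, x⟫) :
    ∃ μ : ℝ, m < μ ∧ ∃ u : E, u ≠ 0 ∧ (H + K) u = (μ : 𝕜) • u := by
  set T := H + K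
  have hT : (T : E →ₗ[𝕜] E).IsSymmetric := hH.add hK
  set S := T.rayleighQuotient '' Metric.sphere 0 1
  have hS : T.rayleighQuotient '' {0}ᶜ = S := T.image_rayleigh_eq_image_rayleigh_sphere one_pos
  have hSbdd : BddAbove S := ⟨‖T‖, by
    rintro _ ⟨z, -, rfl⟩; exact (le_abs_self _).trans (T.rayleighQuotient_le_norm z)⟩
  have hx0 : x ≠ 0 := by rintro rfl; simp at hx
  have hxS : T.rayleighQuotient x ∈ S := hS ▸ ⟨x, hx0, rfl⟩
  set μ := sSup S
  have hmμ : m < μ := by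
    refine lt_of_lt_of_le ?_ (le_csSup hSbdd hxS)
    rwa [ContinuousLinearMap.rayleighQuotient, lt_div_iff₀ (by positivity)]
  have hμ z : re ⟪T z, z⟫ ≤ μ * ‖z‖ ^ 2 := by
    rcases eq_or_ne z 0 with rfl | hz
    · simp
    · have := le_csSup hSbdd (hS ▸ ⟨z, hz, rfl⟩ : T.rayleighQuotient z ∈ S)
      rwa [ContinuousLinearMap.rayleighQuotient, div_le_iff₀ (by positivity)] at this
  obtain ⟨r, -, hr, hrS⟩ := exists_seq_tendsto_sSup ⟨_, hxS⟩ hSbdd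
  choose φ hφ hφr using hrS
  have hφ1 k : ‖φ k‖ = 1 := mem_sphere_zero_iff_norm.1 (hφ k)
  have hlim : Tendsto (fun k => re ⟪T (φ k), φ k⟫) atTop (𝓝 μ) := by
    refine hr.congr fun k => ?_
    rw [← hφr k, ContinuousLinearMap.rayleighQuotient, hφ1 k, one_pow, div_one,
      ContinuousLinearMap.reApplyInnerSelf_apply]
  have hHμ : ‖H‖ < ‖(μ : 𝕜)‖ := by
    rw [norm_ofReal, abs_of_pos (by linarith [norm_nonneg H])]; linarith
  exact ⟨μ, hmμ, exists_eigenvector_of_tendsto_apply_sub_smul hKc hHμ hφ1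
    (hT.tendsto_apply_sub_smul hμ hφ1 hlim)⟩

theorem abs_re_inner_le_of_forall_eigenvalue_abs_le [CompleteSpace E] {H K : E →L[𝕜] E}
    (hH : (H : E →ₗ[𝕜] E).IsSymmetric) (hK : (K : E →ₗ[𝕜] E).IsSymmetric)
    (hKc : IsCompactOperator K) {m : ℝ} (hHm : ‖H‖ ≤ m)
    (hspec : ∀ (μ : ℝ) (u : E), u ≠ 0 → (H + K) u = (μ : 𝕜) • u → |μ| ≤ m) (x : E) :
    |re ⟪(H + K) x, x⟫| ≤ m * ‖x‖ ^ 2 := by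
  refine abs_le.2 ⟨?_, ?_⟩
  · by_contra! hx
    have hx' : m * ‖x‖ ^ 2 < re ⟪(-H + -K) x, x⟫ := by
      simp only [← neg_add, neg_apply, inner_neg_left, map_neg]
      linarith
    obtain ⟨μ, hmμ, u, hu, hμ⟩ := exists_eigenvalue_gt_of_lt_re_inner
      (fun x y => by simpa using hH x y)
      (fun x y => by simpa using hK x y) hKc.neg
      (by rwa [norm_neg]) hx'
    have := hspec (-μ) u hu (by
      rw [← neg_neg (H + K), neg_add, neg_apply, hμ, ofReal_neg, neg_smul])
    linarith [neg_abs_le (-μ)]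
  · by_contra! hx
    obtain ⟨μ, hmμ, u, hu, hμ⟩ := exists_eigenvalue_gt_of_lt_re_inner hH hK hKc hHm hx
    linarith [le_abs_self μ, hspec μ u hu hμ]

theorem abs_re_inner_le_of_anticommute {H B : E →L[𝕜] E} (U : E →ₗᵢ[𝕜] E)
    (hUH : ∀ x, H (U x) = -U (H x)) (hUB : ∀ x, B (U x) = U (B x)) {m : ℝ}
    (hHB : ∀ z, |re ⟪(H + B) z, z⟫| ≤ m * ‖z‖ ^ 2) (z : E) :
    |re ⟪B z, z⟫| ≤ m * ‖z‖ ^ 2 - re ⟪H z, z⟫ := by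
  have h := abs_le.1 (hHB z)
  have hU := abs_le.1 (hHB (U z))
  simp only [add_apply, inner_add_left, map_add, hUH, hUB, inner_neg_left, U.inner_map_map,
    map_neg, U.norm_map] at h hU
  exact abs_le.2 ⟨by linarith, by linarith⟩

theorem abs_le_of_hasEigenvector_add_smul_mul_self [CompleteSpace E] {H B : E →L[𝕜] E}
    (hH : (H : E →ₗ[𝕜] E).IsSymmetric) (hB : (B : E →ₗ[𝕜] E).IsSymmetric)
    (hBc : IsCompactOperator B) (U : E →ₗᵢ[𝕜] E) (hUH : ∀ x, H (U x) = -U (H x))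
    (hUB : ∀ x, B (U x) = U (B x)) {m : ℝ} (hm : 0 < m) (hHm : ‖H‖ ≤ m)
    (hspec : ∀ (μ : ℝ) (u : E), u ≠ 0 → (H + B) u = (μ : 𝕜) • u → |μ| ≤ m)
    {e : ℝ} {ψ : E} (hψ : ψ ≠ 0)
    (heig : (H + (((2 * m)⁻¹ : ℝ) : 𝕜) • (B * B)) ψ = (e : 𝕜) • ψ) :
    |e| ≤ m := by
  have hnum := abs_re_inner_le_of_forall_eigenvalue_abs_le hH hB hBc hHm hspec
  have hHform z : |re ⟪H z, z⟫| ≤ m * ‖z‖ ^ 2 :=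
    (abs_re_inner_apply_self_le H z).trans (by gcongr)
  set A : E →ₗ[𝕜] E := (m : 𝕜) • LinearMap.id - (H : E →ₗ[𝕜] E)
  have hAform z : re ⟪A z, z⟫ = m * ‖z‖ ^ 2 - re ⟪H z, z⟫ := re_inner_smul_sub_apply_self _ _ _
  have hBA z : |re ⟪B z, z⟫| ≤ re ⟪A z, z⟫ :=
    hAform z ▸ abs_re_inner_le_of_anticommute U hUH hUB hnum z
  have hBψ : ‖B ψ‖ ^ 2 ≤ 2 * m * (m * ‖ψ‖ ^ 2 - re ⟪H ψ, ψ⟫) := by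
    rw [← hAform]
    exact hB.norm_sq_le_of_abs_re_inner_le (by positivity) hBA
      (fun z => by rw [hAform]; linarith [abs_le.1 (hHform z)]) ψ
  have he : e * ‖ψ‖ ^ 2 = re ⟪H ψ, ψ⟫ + (2 * m)⁻¹ * ‖B ψ‖ ^ 2 := by
    have := congrArg (fun v => re ⟪v, ψ⟫) heig
    simp only [add_apply, smul_apply, mul_apply_eq_comp, inner_add_left, inner_smul_left,
      conj_ofReal, map_add, re_ofReal_mul, inner_self_eq_norm_sq] at this
    rw [← this, ← ContinuousLinearMap.coe_coe B, hB, ContinuousLinearMap.coe_coe,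
      inner_self_eq_norm_sq]
  have hψ2 : 0 < ‖ψ‖ ^ 2 := by positivity
  have hBψ' : (2 * m)⁻¹ * ‖B ψ‖ ^ 2 ≤ m * ‖ψ‖ ^ 2 - re ⟪H ψ, ψ⟫ := by
    rw [inv_mul_le_iff₀ (by positivity)]; exact hBψ
  have hBnn : 0 ≤ (2 * m)⁻¹ * ‖B ψ‖ ^ 2 := by positivity
  have hHψ := abs_le.1 (hHform ψ)
  exact abs_le.2 ⟨le_of_mul_le_mul_right (by linarith) hψ2,
    le_of_mul_le_mul_right (by linarith) hψ2⟩

end Hilbert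

namespace DHKS

variable {α : Type*} {ν : ℕ}

lemma inner_L2_eq_tsum (u v : L2 α) : ⟪u, v⟫_ℂ = ∑' n, conj ((u : α → ℂ) n) * (v : α → ℂ) n := by
  rw [lp.inner_eq_tsum]
  exact tsum_congr fun n => by rw [RCLike.inner_apply, mul_comm]

lemma mulOp_isSymmetric (V : α → ℝ) (C : ℝ) (hC : ∀ n, |V n| ≤ C) :
    (mulOp V C hC : L2 α →ₗ[ℂ] L2 α).IsSymmetric := fun u v => by
  simp only [ContinuousLinearMap.coe_coe, inner_L2_eq_tsum, mulOp_apply, map_mul,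
    Complex.conj_ofReal]
  exact tsum_congr fun n => by ring

lemma norm_mulOp_le (V : α → ℝ) (C : ℝ) (hC : ∀ n, |V n| ≤ C) : ‖mulOp V C hC‖ ≤ max C 0 :=
  LinearMap.mkContinuous_norm_le _ (le_max_right _ _) _

lemma mulOp_mul_sq (γ : ℝ) (V : α → ℝ) (C D : ℝ) (hC : ∀ n, |V n| ≤ C)
    (hD : ∀ n, |γ * V n ^ 2| ≤ D) :
    mulOp (fun n => γ * V n ^ 2) D hD = (γ : ℂ) • (mulOp V C hC * mulOp V C hC) := by
  ext u n
  simp only [smul_apply, mul_apply_eq_comp, lp.coeFn_smul,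
    Pi.smul_apply, mulOp_apply, smul_eq_mul]
  push_cast
  ring

lemma inner_compOp_add_left (e : Zlat ν) (u v : L2 (Zlat ν)) :
    ⟪compOp (· + e) (add_left_injective e) u, v⟫_ℂ
      = ⟪u, compOp (· + -e) (add_left_injective (-e)) v⟫_ℂ := by
  simp only [inner_L2_eq_tsum, compOp_apply]
  rw [← (Equiv.addRight e).tsum_eq fun n => conj ((u : Zlat ν → ℂ) n) * (v : Zlat ν → ℂ) (n + -e)]
  exact tsum_congr fun n => by simp

lemma H0_isSymmetric : (H0 ν : L2 (Zlat ν) →ₗ[ℂ] L2 (Zlat ν)).IsSymmetric := fun u v => by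
  simp only [ContinuousLinearMap.coe_coe, H0, sum_apply,
    add_apply, sum_inner, inner_sum, inner_add_left, inner_add_right]
  refine Finset.sum_congr rfl fun i _ => ?_
  have := inner_compOp_add_left (-unitVec ν i) u v
  rw [neg_neg] at this
  rw [inner_compOp_add_left, this, add_comm]

lemma norm_H0_le : ‖H0 ν‖ ≤ 2 * ν := by
  have hcomp (e : Zlat ν) : ‖compOp (· + e) (add_left_injective e)‖ ≤ 1 :=
    LinearMap.mkContinuous_norm_le _ zero_le_one _
  calc ‖H0 ν‖ ≤ ∑ i : Fin ν, (1 + 1 : ℝ) :=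
        (norm_sum_le _ _).trans <| Finset.sum_le_sum fun i _ =>
          (norm_add_le _ _).trans (add_le_add (hcomp _) (hcomp _))
    _ = 2 * ν := by simp; ring

lemma neg_one_pow_normOne (n : Zlat ν) :
    (-1 : ℂ) ^ normOne n = ((∏ k, (n k).negOnePow : ℤˣ) : ℤ) := by
  simp [normOne, Finset.prod_pow_eq_pow_sum]

lemma neg_one_pow_normOne_add (n m : Zlat ν) (hm : normOne m = 1) :
    (-1 : ℂ) ^ normOne (n + m) = -(-1 : ℂ) ^ normOne n := by
  have h := neg_one_pow_normOne m
  rw [hm, pow_one] at h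
  simp only [neg_one_pow_normOne, Pi.add_apply, Int.negOnePow_add, Finset.prod_mul_distrib,
    Units.val_mul, Int.cast_mul, ← h]
  ring

lemma normOne_unitVec (i : Fin ν) : normOne (unitVec ν i) = 1 := by
  simp [normOne, unitVec, apply_ite]

lemma normOne_neg (n : Zlat ν) : normOne (-n) = normOne n := by
  simp [normOne]

lemma Uop_apply (u : L2 (Zlat ν)) (n : Zlat ν) :
    (Uop ν u : Zlat ν → ℂ) n = (-1 : ℂ) ^ normOne n * (u : Zlat ν → ℂ) n := by
  simp [Uop]

lemma Uop_Uop (u : L2 (Zlat ν)) : Uop ν (Uop ν u) = u := by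
  ext n
  rw [Uop_apply, Uop_apply, ← mul_assoc, ← pow_add, ← two_mul, pow_mul, neg_one_sq, one_pow,
    one_mul]

lemma norm_Uop (u : L2 (Zlat ν)) : ‖Uop ν u‖ = ‖u‖ := by
  have hU : (Uop ν : L2 (Zlat ν) →ₗ[ℂ] L2 (Zlat ν)).IsSymmetric := mulOp_isSymmetric _ _ _
  rw [← sq_eq_sq₀ (norm_nonneg _) (norm_nonneg _), ← inner_self_eq_norm_sq (𝕜 := ℂ),
    ← inner_self_eq_norm_sq (𝕜 := ℂ), ← ContinuousLinearMap.coe_coe, hU,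
    ContinuousLinearMap.coe_coe, Uop_Uop]

def parity (ν : ℕ) : L2 (Zlat ν) →ₗᵢ[ℂ] L2 (Zlat ν) :=
  ⟨Uop ν, norm_Uop⟩

lemma parity_apply (u : L2 (Zlat ν)) : parity ν u = Uop ν u := rfl

lemma H0_parity (u : L2 (Zlat ν)) : H0 ν (parity ν u) = -parity ν (H0 ν u) := by
  ext n
  simp only [parity_apply, H0_apply, lp.coeFn_neg, Pi.neg_apply, Uop_apply, Finset.mul_sum,
    sub_eq_add_neg, neg_one_pow_normOne_add _ _ (normOne_unitVec _),
    neg_one_pow_normOne_add _ _ ((normOne_neg _).trans (normOne_unitVec _)),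
    ← Finset.sum_neg_distrib]
  exact Finset.sum_congr rfl fun i _ => by ring

lemma mulOp_parity (V : Zlat ν → ℝ) (C : ℝ) (hC : ∀ n, |V n| ≤ C) (u : L2 (Zlat ν)) :
    mulOp V C hC (parity ν u) = parity ν (mulOp V C hC u) := by
  ext n
  simp only [parity_apply, mulOp_apply, Uop_apply]
  ring

def mulOpFinset [DecidableEq α] (V : α → ℝ) (s : Finset α) : L2 α →L[ℂ] L2 α :=
  ∑ n ∈ s, (V n : ℂ) • (lp.singleContinuousLinearMap ℂ (fun _ : α => ℂ) 2 n).comp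
    (lp.evalCLM ℂ (fun _ : α => ℂ) 2 n)

lemma mulOpFinset_apply [DecidableEq α] (V : α → ℝ) (s : Finset α) (u : L2 α) (n : α) :
    (mulOpFinset V s u : α → ℂ) n = if n ∈ s then (V n : ℂ) * (u : α → ℂ) n else 0 := by
  simp only [mulOpFinset, sum_apply, smul_apply, ContinuousLinearMap.comp_apply,
    lp.singleContinuousLinearMap_apply]
  rw [lp.coeFn_sum, Finset.sum_apply]
  simp only [lp.coeFn_smul, Pi.smul_apply, lp.single_apply, Pi.single_apply, smul_eq_mul,
    mul_ite, mul_zero, Finset.sum_ite_eq]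
  rfl

lemma isCompactOperator_mulOpFinset [DecidableEq α] (V : α → ℝ) (s : Finset α) :
    IsCompactOperator (mulOpFinset V s) := by
  have hrank (n : α) : IsCompactOperator
      ((lp.singleContinuousLinearMap ℂ (fun _ : α => ℂ) 2 n).comp
        (lp.evalCLM ℂ (fun _ : α => ℂ) 2 n)) :=
    (isCompactOperator_of_locallyCompactSpace_rng
      (lp.singleContinuousLinearMap ℂ (fun _ : α => ℂ) 2 n)).comp_clm _
  exact Submodule.sum_mem (compactOperator (RingHom.id ℂ) (L2 α) (L2 α))
    fun n _ => Submodule.smul_mem _ _ (hrank n)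

lemma mulOp_sub_mulOpFinset [DecidableEq α] (V : α → ℝ) (C D : ℝ) (hC : ∀ n, |V n| ≤ C)
    (s : Finset α) (hD : ∀ n, |if n ∈ s then 0 else V n| ≤ D) :
    mulOp V C hC - mulOpFinset V s = mulOp (fun n => if n ∈ s then 0 else V n) D hD := by
  ext u n
  rw [sub_apply, lp.coeFn_sub, Pi.sub_apply, mulOp_apply, mulOp_apply,
    mulOpFinset_apply]
  split_ifs <;> simp

theorem isCompactOperator_mulOp {V : α → ℝ} {C : ℝ} (hC : ∀ n, |V n| ≤ C)
    (hV : Tendsto V cofinite (𝓝 0)) : IsCompactOperator (mulOp V C hC) := by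
  classical
  refine isCompactOperator_of_tendsto (l := atTop) (F := mulOpFinset V) ?_
    (Eventually.of_forall (isCompactOperator_mulOpFinset V))
  rw [Metric.tendsto_atTop]
  intro ε hε
  have hfin : {n | ε / 2 ≤ |V n|}.Finite := by
    refine (hV (Metric.ball_mem_nhds 0 (half_pos hε))).subset fun n hn => ?_
    simpa [Real.dist_eq] using hn
  refine ⟨hfin.toFinset, fun s hs => ?_⟩
  have htail n : |if n ∈ s then 0 else V n| ≤ ε / 2 := by
    split_ifs with hn
    · simpa using (half_pos hε).le
    · by_contra! h
      exact hn (hs (hfin.mem_toFinset.2 h.le))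
  rw [dist_comm, dist_eq_norm, mulOp_sub_mulOpFinset V C (ε / 2) hC s htail]
  exact (norm_mulOp_le _ _ _).trans_lt (by rw [max_eq_left (by positivity)]; linarith)

/-- Theorem 3.1, one bound state: if `V(n) → 0` and `H₀ + (4ν)⁻¹V²`
has an eigenvalue `E` with `|E| > 2ν`, then so does `H₀ + V`. -/
theorem statement4 (ν : ℕ) (hν : 1 ≤ ν) (V : Zlat ν → ℝ) (C : ℝ) (hC : ∀ n, |V n| ≤ C)
    (hV0 : Filter.Tendsto V Filter.cofinite (nhds 0))
    (h : ∃ E : ℝ,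
      IsEigenvalue (H0 ν + mulOp (fun n => (4 * (ν:ℝ))⁻¹ * V n ^ 2) ((4 * (ν:ℝ))⁻¹ * C ^ 2)
          (fun n => by
            have h := abs_mul_sq_le (γ := (4 * (ν:ℝ))⁻¹) (hC n)
            rw [abs_of_nonneg (by positivity : (0:ℝ) ≤ (4 * (ν:ℝ))⁻¹)] at h
            simpa using h)) E ∧ 2 * (ν:ℝ) < |E|) :
    ∃ E' : ℝ, IsEigenvalue (H0 ν + mulOp V C hC) E' ∧ 2 * (ν:ℝ) < |E'| := by
  by_contra! hcon
  obtain ⟨E, ⟨ψ, hψ, heig⟩, hE⟩ := h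
  refine hE.not_ge (abs_le_of_hasEigenvector_add_smul_mul_self H0_isSymmetric
    (mulOp_isSymmetric V C hC) (isCompactOperator_mulOp hC hV0) (parity ν) H0_parity
    (mulOp_parity V C hC) (mul_pos two_pos (Nat.cast_pos.2 hν)) norm_H0_le
    (fun μ u hu hμ => hcon μ ⟨u, hu, hμ⟩) hψ ?_)
  rwa [mulOp_mul_sq _ V C _ hC, show (4 * (ν : ℝ))⁻¹ = (2 * (2 * (ν : ℝ)))⁻¹ by ring] at heig

end DHKS
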